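/- Let n ≥ 1, s ≥ 1, let H : ℝ^n → ℝ be continuously differentiable, let J ∈ ℝ^{n×n} be skew-symmetric, and let {P_j}_{j=0}^{s−1} be the shifted Legendre polynomials on [0,1]. Let h > 0, let Δ_0, …, Δ_{s−1} ∈ ℝ^n, and let u : [0,h] → ℝ^n be a polynomial of degree at most s satisfying u'(ch) = Σ_{j=0}^{s−1} (γ_j − Δ_j) P_j(c) for all c ∈ [0,1], where γ_j = ∫₀¹ J ∇H(u(τh)) P_j(τ) dτ. Then the Hamiltonian error satisfies the exact identity H(u(h)) − H(u(0)) = −h Σ_{j=0}^{s−1} a_jᵀ Δ_j, where a_j = ∫₀¹ ∇H(u(τh)) P_j(τ) dτ; in particular, the terms a_jᵀ γ_j = a_jᵀ J a_j all vanish. -/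

import Mathlib

/-!
Along the path `τ ↦ u (τ h)` the fundamental theorem of calculus gives
`H (u h) - H (u 0) = h ∫₀¹ ∇H(u(τh)) ⬝ Σⱼ Pⱼ(τ) (γⱼ - Δⱼ) dτ = h Σⱼ aⱼ ⬝ (γⱼ - Δⱼ)`.
Since integration commutes with `J`, `γⱼ = J aⱼ`, and `aⱼ ⬝ J aⱼ = 0` by skew-symmetry.
-/

open MeasureTheory Matrix Finset

theorem Matrix.dotProduct_mulVec_self_eq_zero {ι R : Type*} [Fintype ι] [CommRing R]
    [NoZeroDivisors R] [CharZero R] {J : Matrix ι ι R} (hJ : Jᵀ = -J) (v : ι → R) :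
    v ⬝ᵥ J *ᵥ v = 0 := by
  rw [← CharZero.eq_neg_self_iff]
  conv_lhs => rw [dotProduct_mulVec, ← mulVec_transpose, hJ, neg_mulVec, neg_dotProduct,
    dotProduct_comm]

theorem ContDiff.continuous_of_fderiv_eq_dotProduct {ι : Type*} [Fintype ι] [DecidableEq ι]
    {H : (ι → ℝ) → ℝ} (hH : ContDiff ℝ 1 H) {gradH : (ι → ℝ) → ι → ℝ}
    (hgrad : ∀ y w, fderiv ℝ H y w = gradH y ⬝ᵥ w) : Continuous gradH := by
  have hcoord : ∀ i, (fun y => gradH y i) = fun y => fderiv ℝ H y (Pi.single i 1) := by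
    intro i
    ext y
    simp [hgrad]
  exact continuous_pi fun i =>
    hcoord i ▸ (hH.continuous_fderiv one_ne_zero).clm_apply continuous_const

theorem ContDiff.sub_eq_integral_fderiv_comp {E F : Type*} [NormedAddCommGroup E]
    [NormedSpace ℝ E] [NormedAddCommGroup F] [NormedSpace ℝ F] [CompleteSpace F]
    {H : E → F} (hH : ContDiff ℝ 1 H) {x x' : ℝ → E} {a b : ℝ}
    (hx : ∀ t ∈ Set.uIcc a b, HasDerivAt x (x' t) t) (hx' : ContinuousOn x' (Set.uIcc a b)) :
    H (x b) - H (x a) = ∫ t in a..b, fderiv ℝ H (x t) (x' t) := by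
  have hxc : ContinuousOn x (Set.uIcc a b) := fun t ht =>
    (hx t ht).continuousAt.continuousWithinAt
  have hderiv : ∀ t ∈ Set.uIcc a b, HasDerivAt (H ∘ x) (fderiv ℝ H (x t) (x' t)) t :=
    fun t ht => ((hH.differentiable one_ne_zero) (x t)).hasFDerivAt.comp_hasDerivAt t (hx t ht)
  have hcont : ContinuousOn (fun t => fderiv ℝ H (x t) (x' t)) (Set.uIcc a b) :=
    ((hH.continuous_fderiv one_ne_zero).comp_continuousOn hxc).clm_apply hx'
  exact (intervalIntegral.integral_eq_sub_of_hasDerivAt hderiv hcont.intervalIntegrable).symm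

namespace intervalIntegral

variable {ι : Type*} [Fintype ι] {a b : ℝ}

theorem integral_mulVec {κ : Type*} [Fintype κ] (A : Matrix κ ι ℝ) {f : ℝ → ι → ℝ}
    (hf : IntervalIntegrable f volume a b) :
    ∫ t in a..b, A *ᵥ f t = A *ᵥ ∫ t in a..b, f t :=
  A.mulVecLin.toContinuousLinearMap.intervalIntegral_comp_comm hf

theorem integral_dotProduct_const {f : ℝ → ι → ℝ} (hf : IntervalIntegrable f volume a b)
    (c : ι → ℝ) : ∫ t in a..b, f t ⬝ᵥ c = (∫ t in a..b, f t) ⬝ᵥ c :=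
  ((dotProductBilin ℝ ℝ).flip c).toContinuousLinearMap.intervalIntegral_comp_comm hf

theorem integral_dotProduct_sum_smul {κ : Type*} {g : ℝ → ι → ℝ} {p : κ → ℝ → ℝ} {S : Finset κ}
    (hint : ∀ j ∈ S, IntervalIntegrable (fun t => p j t • g t) volume a b) (w : κ → ι → ℝ) :
    ∫ t in a..b, g t ⬝ᵥ ∑ j ∈ S, p j t • w j
      = ∑ j ∈ S, (∫ t in a..b, p j t • g t) ⬝ᵥ w j := by
  have hexpand : ∀ t, g t ⬝ᵥ ∑ j ∈ S, p j t • w j = ∑ j ∈ S, (p j t • g t) ⬝ᵥ w j := fun t => by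
    simp only [dotProduct_sum, dotProduct_smul, smul_dotProduct]
  have hint' : ∀ j ∈ S, IntervalIntegrable (fun t => (p j t • g t) ⬝ᵥ w j) volume a b :=
    fun j hj => let L := ((dotProductBilin ℝ ℝ).flip (w j)).toContinuousLinearMap
      ⟨L.integrable_comp (hint j hj).1, L.integrable_comp (hint j hj).2⟩
  simp_rw [hexpand]
  rw [integral_finsetSum hint']
  exact sum_congr rfl fun j hj => integral_dotProduct_const (hint j hj) (w j)

end intervalIntegral

theorem stmt_6_general (n s : ℕ)
    (H : (Fin n → ℝ) → ℝ) (hH : ContDiff ℝ 1 H)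
    (gradH : (Fin n → ℝ) → Fin n → ℝ)
    (hgrad : ∀ y w, fderiv ℝ H y w = ∑ i, gradH y i * w i)
    (J : Matrix (Fin n) (Fin n) ℝ) (hJ : J.transpose = -J)
    (P : ℕ → Polynomial ℝ)
    (h : ℝ)
    (Δ : ℕ → Fin n → ℝ)
    (u : ℝ → Fin n → ℝ)
    (γ a : ℕ → Fin n → ℝ)
    (hγ : ∀ j, γ j = ∫ τ in (0:ℝ)..1, (P j).eval τ • J.mulVec (gradH (u (τ * h))))
    (ha : ∀ j, a j = ∫ τ in (0:ℝ)..1, (P j).eval τ • gradH (u (τ * h)))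
    (hu' : ∀ c ∈ Set.Icc (0:ℝ) 1,
      HasDerivAt u (∑ j ∈ Finset.range s, (P j).eval c • (γ j - Δ j)) (c * h)) :
    (H (u h) - H (u 0) = -h * ∑ j ∈ Finset.range s, ∑ i, a j i * Δ j i)
    ∧ (∀ j, (∑ i, a j i * γ j i) = ∑ i, a j i * J.mulVec (a j) i)
    ∧ (∀ j, (∑ i, a j i * γ j i) = 0) := by
  have hgrad_dot : ∀ y w, fderiv ℝ H y w = gradH y ⬝ᵥ w := hgrad
  have hIcc : Set.uIcc (0:ℝ) 1 = Set.Icc 0 1 := Set.uIcc_of_le zero_le_one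
  have hpath : ∀ τ ∈ Set.uIcc (0:ℝ) 1, HasDerivAt (fun τ => u (τ * h))
      (∑ j ∈ range s, (P j).eval τ • (h • (γ j - Δ j))) τ := by
    intro τ hτ
    rw [hIcc] at hτ
    refine ((hu' τ hτ).scomp τ ((hasDerivAt_id τ).mul_const h)).congr_deriv ?_
    simp only [one_mul, smul_sum, smul_comm h]
  have hgrad_cont : ContinuousOn (fun τ => gradH (u (τ * h))) (Set.uIcc 0 1) :=
    (hH.continuous_of_fderiv_eq_dotProduct hgrad_dot).comp_continuousOn
      fun τ hτ => (hpath τ hτ).continuousAt.continuousWithinAt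
  have hPg : ∀ j, IntervalIntegrable (fun τ => (P j).eval τ • gradH (u (τ * h))) volume 0 1 :=
    fun j => ((P j).continuous.continuousOn.smul hgrad_cont).intervalIntegrable
  have hγa : ∀ j, γ j = J *ᵥ a j := fun j => by
    simp_rw [hγ, ha, ← intervalIntegral.integral_mulVec J (hPg j), mulVec_smul]
  have hskew : ∀ j, a j ⬝ᵥ γ j = 0 := fun j => hγa j ▸ dotProduct_mulVec_self_eq_zero hJ (a j)
  refine ⟨?_, fun j => by rw [hγa j], hskew⟩
  have hvel_cont : ContinuousOn (fun τ => ∑ j ∈ range s, (P j).eval τ • (h • (γ j - Δ j)))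
      (Set.uIcc 0 1) :=
    continuousOn_finsetSum _ fun j _ => ((P j).continuous.smul continuous_const).continuousOn
  have hftc := hH.sub_eq_integral_fderiv_comp hpath hvel_cont
  simp only [one_mul, zero_mul, hgrad_dot] at hftc
  rw [hftc, intervalIntegral.integral_dotProduct_sum_smul (fun j _ => hPg j), neg_mul, mul_sum,
    ← sum_neg_distrib]
  refine sum_congr rfl fun j _ => ?_
  rw [← ha, dotProduct_smul, dotProduct_sub, hskew, smul_eq_mul, zero_sub, mul_neg]
  rfl

/-- Hamiltonian error identity for the HBVM polynomial with quadrature defects: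
if `u'(ch) = Σ_{j<s} (γ_j − Δ_j) P_j(c)` with `γ_j = ∫₀¹ J ∇H(u(τh)) P_j(τ) dτ` and `J`
skew-symmetric, then `H(u(h)) − H(u(0)) = −h Σ_{j<s} a_jᵀ Δ_j`, where
`a_j = ∫₀¹ ∇H(u(τh)) P_j(τ) dτ`; in particular the terms `a_jᵀ γ_j` all vanish. -/
theorem stmt_6 (n s : ℕ) (hn : 1 ≤ n) (hs : 1 ≤ s)
    (H : (Fin n → ℝ) → ℝ) (hH : ContDiff ℝ 1 H)
    (gradH : (Fin n → ℝ) → Fin n → ℝ)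
    (hgrad : ∀ y w, fderiv ℝ H y w = ∑ i, gradH y i * w i)
    (J : Matrix (Fin n) (Fin n) ℝ) (hJ : J.transpose = -J)
    (P : ℕ → Polynomial ℝ)
    (hdeg : ∀ j, (P j).degree = j)
    (horth : ∀ i j, (∫ x in (0:ℝ)..1, (P i).eval x * (P j).eval x)
      = if i = j then 1 else 0)
    (h : ℝ) (hh : 0 < h)
    (Δ : ℕ → Fin n → ℝ)
    (u : ℝ → Fin n → ℝ)
    (hupoly : ∀ i, ∃ Q : Polynomial ℝ, Q.natDegree ≤ s ∧ ∀ t, u t i = Q.eval t)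
    (γ a : ℕ → Fin n → ℝ)
    (hγ : ∀ j, γ j = ∫ τ in (0:ℝ)..1, (P j).eval τ • J.mulVec (gradH (u (τ * h))))
    (ha : ∀ j, a j = ∫ τ in (0:ℝ)..1, (P j).eval τ • gradH (u (τ * h)))
    (hu' : ∀ c ∈ Set.Icc (0:ℝ) 1,
      HasDerivAt u (∑ j ∈ Finset.range s, (P j).eval c • (γ j - Δ j)) (c * h)) :
    (H (u h) - H (u 0) = -h * ∑ j ∈ Finset.range s, ∑ i, a j i * Δ j i)
    ∧ (∀ j, (∑ i, a j i * γ j i) = ∑ i, a j i * J.mulVec (a j) i)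
    ∧ (∀ j, (∑ i, a j i * γ j i) = 0) :=
  stmt_6_general n s H hH gradH hgrad J hJ P h Δ u γ a hγ ha hu'
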